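/- Let H = ηp C + Z with ‖Z‖₂ ≤ Δ, and set σ = ηp·√n·‖r − αe‖₂; suppose Δ ≤ σ/3. Let û₁, û₂ ∈ ℝ^n be orthonormal with H Hᵀ ûᵢ = σ̂ᵢ² ûᵢ, where σ̂₁ ≥ σ̂₂ are the two largest singular values of H; set Û = [û₁ û₂], Σ̂ = diag(σ̂₁, σ̂₂), and define E₅ = Z²·Û·Σ̂^{−2}. Then ‖E₅‖_max ≤ 27Δ³/(4σ³) + (9/(4σ²))·( ‖Z² u₁‖_∞ + ‖Z² u₂‖_∞ ). -/

import Mathlib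

open Matrix MeasureTheory ProbabilityTheory Real

noncomputable section

/-- Euclidean (ℓ₂) norm of a vector in ℝ^n. -/
def norm2 {n : ℕ} (x : Fin n → ℝ) : ℝ := Real.sqrt (∑ i, x i ^ 2)

/-- Entrywise maximum absolute value (ℓ_∞ norm) of a vector in ℝ^n. -/
def normInf {n : ℕ} (x : Fin n → ℝ) : ℝ := ⨆ i, |x i|

/-- Euclidean inner product on ℝ^n. -/
def inner2 {n : ℕ} (x y : Fin n → ℝ) : ℝ := ∑ i, x i * y i

/-- Spectral norm (ℓ₂ operator norm) of a real matrix. -/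
def specNorm {m n : ℕ} (A : Matrix (Fin m) (Fin n) ℝ) : ℝ :=
  ⨆ x : {x : Fin n → ℝ // norm2 x ≤ 1}, norm2 (A.mulVec x.1)

/-- Max-norm: maximum absolute value of the entries of a matrix. -/
def maxNorm {m n : ℕ} (A : Matrix (Fin m) (Fin n) ℝ) : ℝ :=
  ⨆ q : Fin m × Fin n, |A q.1 q.2|

/-- The n×2 matrix with columns u and v. -/
def twoCols {n : ℕ} (u v : Fin n → ℝ) : Matrix (Fin n) (Fin 2) ℝ :=
  Matrix.of fun i j => ![u i, v i] j

/-- The all-ones vector in ℝ^n. -/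
def onesVec (n : ℕ) : Fin n → ℝ := fun _ => 1

/-- `σ1 ≥ σ2 ≥ 0` are the two largest singular values of `H`, with corresponding
orthonormal left singular vectors `u1, u2` (eigenvectors of `H Hᵀ`). -/
def IsTopTwoSingular {n : ℕ} (H : Matrix (Fin n) (Fin n) ℝ)
    (σ1 σ2 : ℝ) (u1 u2 : Fin n → ℝ) : Prop :=
  0 ≤ σ2 ∧ σ2 ≤ σ1 ∧
  inner2 u1 u1 = 1 ∧ inner2 u2 u2 = 1 ∧ inner2 u1 u2 = 0 ∧
  (H * Hᵀ).mulVec u1 = σ1 ^ 2 • u1 ∧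
  (H * Hᵀ).mulVec u2 = σ2 ^ 2 • u2 ∧
  ∀ v : Fin n → ℝ, inner2 v u1 = 0 → inner2 v u2 = 0 →
    inner2 ((H * Hᵀ).mulVec v) v ≤ σ2 ^ 2 * inner2 v v

/-- The uniform probability measure on the interval [−M, M]. -/
def unifIcc (M : ℝ) : Measure ℝ :=
  (ENNReal.ofReal (2 * M))⁻¹ • volume.restrict (Set.Icc (-M) M)

/-- The ERO mixture law of a single pairwise measurement `R_{ij}` (with `a = r_i`, `b = r_j`):
`a − b` w.p. `ηp`, uniform on `[−M, M]` w.p. `(1−η)p`, and `0` w.p. `1−p`. -/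
def EROmix (M p η a b : ℝ) : Measure ℝ :=
  ENNReal.ofReal (η * p) • Measure.dirac (a - b) +
    ENNReal.ofReal ((1 - η) * p) • unifIcc M +
    ENNReal.ofReal (1 - p) • Measure.dirac (0 : ℝ)

/-- The Erdős–Rényi Outliers (ERO) model: `H` is skew-symmetric with zero diagonal, the
above-diagonal entries are jointly independent, and each `H_{ij}` (i < j) has the ERO
mixture law. -/
structure IsEROModel {Ω : Type} [MeasurableSpace Ω] (P : Measure Ω)
    {n : ℕ} (M p η : ℝ) (r : Fin n → ℝ)
    (H : Ω → Matrix (Fin n) (Fin n) ℝ) : Prop where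
  diag : ∀ ω i, H ω i i = 0
  skew : ∀ ω i j, H ω j i = - H ω i j
  meas : ∀ i j, Measurable fun ω => H ω i j
  indep : iIndepFun
    (fun (q : {q : Fin n × Fin n // q.1 < q.2}) ω => H ω q.1.1 q.1.2) P
  law : ∀ i j : Fin n, i < j →
    Measure.map (fun ω => H ω i j) P = EROmix M p η (r i) (r j)

/-!
The signal part of `H` has rank two: `ηp C = σ (u₂ u₁ᵀ - u₁ u₂ᵀ)` with `u₁, u₂` orthonormal.
Hence `‖Hᵀ v‖ ≥ σ - Δ` for every unit vector `v` of the plane `span {u₁, u₂}`, and the min-max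
principle gives `σ̂₂ ≥ σ - Δ ≥ 2σ/3`. For a top left singular vector `û`, projecting
`σ̂² û = H (Hᵀ û)` onto the orthogonal complement of that plane kills the signal, so the
component `w` of `û` orthogonal to the plane satisfies `σ̂² ‖w‖ ≤ Δ ‖Hᵀ û‖ = Δ σ̂`. Writing
`û = a u₁ + b u₂ + w` with `|a|, |b| ≤ 1` gives
`|(Z² û)ᵢ| ≤ ‖Z² u₁‖_∞ + ‖Z² u₂‖_∞ + Δ³ / σ̂`, and dividing by `σ̂² ≥ 4σ²/9` gives the bound.
-/

open scoped Matrix.Norms.L2Operator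

section Norms

variable {m n : ℕ}

lemma norm2_nonneg (x : Fin n → ℝ) : 0 ≤ norm2 x := Real.sqrt_nonneg _

lemma inner2_eq_dotProduct (x y : Fin n → ℝ) : inner2 x y = x ⬝ᵥ y := rfl

lemma norm2_eq_norm (x : Fin n → ℝ) :
    norm2 x = ‖(WithLp.toLp 2 x : EuclideanSpace ℝ (Fin n))‖ := by
  simp [norm2, EuclideanSpace.norm_eq]

lemma norm2_sq (x : Fin n → ℝ) : norm2 x ^ 2 = x ⬝ᵥ x := by
  rw [norm2_eq_norm, ← real_inner_self_eq_norm_sq]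
  rfl

lemma norm2_pos {x : Fin n → ℝ} : 0 < norm2 x ↔ x ≠ 0 := by
  simp [norm2_eq_norm]

lemma norm2_smul (c : ℝ) (x : Fin n → ℝ) : norm2 (c • x) = |c| * norm2 x := by
  simp [norm2_eq_norm, norm_smul]

lemma norm2_sub_le (x y : Fin n → ℝ) : norm2 (x - y) ≤ norm2 x + norm2 y := by
  simpa [norm2_eq_norm] using
    norm_sub_le (WithLp.toLp 2 x : EuclideanSpace ℝ (Fin n)) (WithLp.toLp 2 y)

lemma abs_apply_le_norm2 (x : Fin n → ℝ) (i : Fin n) : |x i| ≤ norm2 x := by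
  simpa [norm2_eq_norm] using PiLp.norm_apply_le (WithLp.toLp 2 x : EuclideanSpace ℝ (Fin n)) i

lemma abs_dotProduct_le (x y : Fin n → ℝ) : |x ⬝ᵥ y| ≤ norm2 x * norm2 y := by
  simpa [norm2_eq_norm, EuclideanSpace.inner_toLp_toLp, dotProduct_comm] using
    abs_real_inner_le_norm (WithLp.toLp 2 x : EuclideanSpace ℝ (Fin n)) (WithLp.toLp 2 y)

lemma norm2_eq_one_iff {x : Fin n → ℝ} : norm2 x = 1 ↔ x ⬝ᵥ x = 1 := by
  rw [← norm2_sq, pow_eq_one_iff_of_nonneg (norm2_nonneg x) two_ne_zero]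

lemma normInf_nonneg (x : Fin n → ℝ) : 0 ≤ normInf x :=
  Real.iSup_nonneg fun _ => abs_nonneg _

lemma abs_apply_le_normInf (x : Fin n → ℝ) (i : Fin n) : |x i| ≤ normInf x :=
  le_ciSup (f := fun i => |x i|) (Set.finite_range _).bddAbove i

lemma norm2_mulVec_le_l2_opNorm (A : Matrix (Fin m) (Fin n) ℝ) (x : Fin n → ℝ) :
    norm2 (A *ᵥ x) ≤ ‖A‖ * norm2 x := by
  simpa [norm2_eq_norm] using A.l2_opNorm_mulVec (WithLp.toLp 2 x)

lemma specNorm_eq_l2_opNorm (A : Matrix (Fin m) (Fin n) ℝ) : specNorm A = ‖A‖ := by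
  have hball : ∀ x : {x : Fin n → ℝ // norm2 x ≤ 1}, norm2 (A *ᵥ x.1) ≤ ‖A‖ := fun x =>
    (norm2_mulVec_le_l2_opNorm A x.1).trans (mul_le_of_le_one_right (norm_nonneg A) x.2)
  have : Nonempty {x : Fin n → ℝ // norm2 x ≤ 1} := ⟨⟨0, by simp [norm2]⟩⟩
  refine le_antisymm (ciSup_le hball) ?_
  rw [Matrix.l2_opNorm_def]
  refine ContinuousLinearMap.opNorm_le_of_unit_norm ?_ fun x hx => ?_
  · exact Real.iSup_nonneg fun _ => norm2_nonneg _
  · have hx1 : norm2 x.ofLp ≤ 1 := by simp [norm2_eq_norm, hx]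
    calc ‖(Matrix.toEuclideanLin.trans LinearMap.toContinuousLinearMap) A x‖
        = norm2 (A *ᵥ x.ofLp) := by rw [norm2_eq_norm]; rfl
      _ ≤ specNorm A := le_ciSup ⟨‖A‖, Set.forall_mem_range.2 hball⟩ ⟨x.ofLp, hx1⟩

lemma specNorm_transpose (A : Matrix (Fin m) (Fin n) ℝ) : specNorm Aᵀ = specNorm A := by
  rw [specNorm_eq_l2_opNorm, specNorm_eq_l2_opNorm, ← Matrix.conjTranspose_eq_transpose_of_trivial,
    Matrix.l2_opNorm_conjTranspose]

lemma norm2_mulVec_le (A : Matrix (Fin m) (Fin n) ℝ) (x : Fin n → ℝ) :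
    norm2 (A *ᵥ x) ≤ specNorm A * norm2 x :=
  specNorm_eq_l2_opNorm A ▸ norm2_mulVec_le_l2_opNorm A x

lemma specNorm_nonneg (A : Matrix (Fin m) (Fin n) ℝ) : 0 ≤ specNorm A :=
  specNorm_eq_l2_opNorm A ▸ norm_nonneg A

lemma mul_transpose_mulVec_dotProduct (H : Matrix (Fin m) (Fin n) ℝ) (v : Fin m → ℝ) :
    (H * Hᵀ) *ᵥ v ⬝ᵥ v = norm2 (Hᵀ *ᵥ v) ^ 2 := by
  rw [norm2_sq, ← mulVec_mulVec, dotProduct_comm, dotProduct_mulVec, ← mulVec_transpose]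

end Norms

section RankTwo

variable {n : ℕ}

def skewPair (u₁ u₂ : Fin n → ℝ) : Matrix (Fin n) (Fin n) ℝ := vecMulVec u₂ u₁ - vecMulVec u₁ u₂

def perpProj (u₁ u₂ : Fin n → ℝ) : Matrix (Fin n) (Fin n) ℝ :=
  1 - vecMulVec u₁ u₁ - vecMulVec u₂ u₂

section OrthonormalPair

variable {u₁ u₂ : Fin n → ℝ}

lemma skewPair_mulVec (x : Fin n → ℝ) :
    skewPair u₁ u₂ *ᵥ x = (u₁ ⬝ᵥ x) • u₂ - (u₂ ⬝ᵥ x) • u₁ := by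
  simp [skewPair, sub_mulVec, vecMulVec_mulVec]

lemma transpose_skewPair : (skewPair u₁ u₂)ᵀ = -skewPair u₁ u₂ := by
  simp [skewPair, transpose_vecMulVec]

lemma perpProj_mulVec (x : Fin n → ℝ) :
    perpProj u₁ u₂ *ᵥ x = x - (u₁ ⬝ᵥ x) • u₁ - (u₂ ⬝ᵥ x) • u₂ := by
  simp [perpProj, sub_mulVec, vecMulVec_mulVec]

lemma eq_add_perpProj_mulVec (x : Fin n → ℝ) :
    x = (u₁ ⬝ᵥ x) • u₁ + (u₂ ⬝ᵥ x) • u₂ + perpProj u₁ u₂ *ᵥ x := by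
  rw [perpProj_mulVec]; abel

lemma perpProj_mul_skewPair (h₁ : u₁ ⬝ᵥ u₁ = 1) (h₂ : u₂ ⬝ᵥ u₂ = 1) (h₁₂ : u₁ ⬝ᵥ u₂ = 0) :
    perpProj u₁ u₂ * skewPair u₁ u₂ = 0 := by
  simp [perpProj, skewPair, sub_mul, mul_sub, vecMulVec_mul_vecMulVec, h₁, h₂, h₁₂,
    dotProduct_comm u₂ u₁]

lemma norm2_perpProj_mulVec_le (h₁ : u₁ ⬝ᵥ u₁ = 1) (h₂ : u₂ ⬝ᵥ u₂ = 1) (h₁₂ : u₁ ⬝ᵥ u₂ = 0)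
    (x : Fin n → ℝ) : norm2 (perpProj u₁ u₂ *ᵥ x) ≤ norm2 x := by
  have h₂₁ : u₂ ⬝ᵥ u₁ = 0 := dotProduct_comm u₂ u₁ ▸ h₁₂
  have hsq : norm2 (perpProj u₁ u₂ *ᵥ x) ^ 2 = norm2 x ^ 2 - (u₁ ⬝ᵥ x) ^ 2 - (u₂ ⬝ᵥ x) ^ 2 := by
    simp only [norm2_sq, perpProj_mulVec, dotProduct_sub, sub_dotProduct, dotProduct_smul,
      smul_dotProduct, smul_eq_mul, h₁, h₂, h₁₂, h₂₁, dotProduct_comm x u₁, dotProduct_comm x u₂]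
    ring
  refine (pow_le_pow_iff_left₀ (norm2_nonneg _) (norm2_nonneg x) two_ne_zero).1 ?_
  nlinarith [sq_nonneg (u₁ ⬝ᵥ x), sq_nonneg (u₂ ⬝ᵥ x)]

lemma dotProduct_self_smul_add_smul (h₁ : u₁ ⬝ᵥ u₁ = 1) (h₂ : u₂ ⬝ᵥ u₂ = 1)
    (h₁₂ : u₁ ⬝ᵥ u₂ = 0) (a b : ℝ) :
    (a • u₁ + b • u₂) ⬝ᵥ (a • u₁ + b • u₂) = a ^ 2 + b ^ 2 := by
  simp only [dotProduct_add, add_dotProduct, dotProduct_smul, smul_dotProduct, smul_eq_mul, h₁, h₂,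
    h₁₂, dotProduct_comm u₂ u₁]
  ring

lemma skewPair_mulVec_smul_add_smul (h₁ : u₁ ⬝ᵥ u₁ = 1) (h₂ : u₂ ⬝ᵥ u₂ = 1)
    (h₁₂ : u₁ ⬝ᵥ u₂ = 0) (a b : ℝ) :
    skewPair u₁ u₂ *ᵥ (a • u₁ + b • u₂) = (-b) • u₁ + a • u₂ := by
  simp only [skewPair_mulVec, dotProduct_add, dotProduct_smul, smul_eq_mul, h₁, h₂, h₁₂,
    dotProduct_comm u₂ u₁]
  module

end OrthonormalPair

lemma exists_sq_add_sq_eq_one_and_mul_add_mul_eq_zero (p q : ℝ) :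
    ∃ a b : ℝ, a ^ 2 + b ^ 2 = 1 ∧ a * p + b * q = 0 := by
  by_cases h : p ^ 2 + q ^ 2 = 0
  · have hp : p = 0 := by nlinarith [sq_nonneg p, sq_nonneg q]
    exact ⟨1, 0, by norm_num, by simp [hp]⟩
  · have ht := Real.sq_sqrt (add_nonneg (sq_nonneg p) (sq_nonneg q))
    refine ⟨q / √(p ^ 2 + q ^ 2), -p / √(p ^ 2 + q ^ 2), ?_, by ring⟩
    rw [div_pow, div_pow, neg_sq, ← add_div, ht, add_comm, div_self h]

namespace IsTopTwoSingular

variable {H : Matrix (Fin n) (Fin n) ℝ} {σ₁ σ₂ : ℝ} {v₁ v₂ : Fin n → ℝ}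

lemma mul_transpose_mulVec_dotProduct_le (h : IsTopTwoSingular H σ₁ σ₂ v₁ v₂) {x : Fin n → ℝ}
    (hx : x ⬝ᵥ v₁ = 0) : (H * Hᵀ) *ᵥ x ⬝ᵥ x ≤ σ₂ ^ 2 * (x ⬝ᵥ x) := by
  obtain ⟨-, -, -, h₂, h₁₂, -, hev₂, hmax⟩ := h
  simp only [inner2_eq_dotProduct] at h₂ h₁₂ hmax
  set c := x ⬝ᵥ v₂
  set w := x - c • v₂ with hw
  have hw₁ : w ⬝ᵥ v₁ = 0 := by
    simp only [hw, sub_dotProduct, smul_dotProduct, hx, dotProduct_comm v₂ v₁]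
    simp [h₁₂]
  have hw₂ : w ⬝ᵥ v₂ = 0 := by
    simp [hw, sub_dotProduct, smul_dotProduct, h₂, c]
  have hcross : (H * Hᵀ) *ᵥ w ⬝ᵥ v₂ = 0 := by
    rw [dotProduct_comm, dotProduct_mulVec, ← mulVec_transpose, transpose_mul, transpose_transpose,
      hev₂, smul_dotProduct, dotProduct_comm, hw₂, smul_zero]
  have hx' : x = c • v₂ + w := by rw [hw]; abel
  have hwx : w ⬝ᵥ w = x ⬝ᵥ x - c ^ 2 := by
    rw [hx']
    simp only [add_dotProduct, dotProduct_add, smul_dotProduct, dotProduct_smul, hw₂,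
      dotProduct_comm v₂ w, h₂, smul_eq_mul]
    ring
  calc (H * Hᵀ) *ᵥ x ⬝ᵥ x = c ^ 2 * σ₂ ^ 2 + (H * Hᵀ) *ᵥ w ⬝ᵥ w := by
        conv_lhs => rw [hx']
        simp only [mulVec_add, mulVec_smul, hev₂, add_dotProduct, dotProduct_add, smul_dotProduct,
          dotProduct_smul, hcross, dotProduct_comm v₂ w, hw₂, h₂,
          smul_eq_mul]
        ring
    _ ≤ c ^ 2 * σ₂ ^ 2 + σ₂ ^ 2 * (w ⬝ᵥ w) := by gcongr; exact hmax w hw₁ hw₂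
    _ = σ₂ ^ 2 * (x ⬝ᵥ x) := by rw [hwx]; ring

lemma le_of_le_norm2_transpose_mulVec (h : IsTopTwoSingular H σ₁ σ₂ v₁ v₂) {u₁ u₂ : Fin n → ℝ}
    (h₁ : u₁ ⬝ᵥ u₁ = 1) (h₂ : u₂ ⬝ᵥ u₂ = 1) (h₁₂ : u₁ ⬝ᵥ u₂ = 0) {m : ℝ} (hm : 0 ≤ m)
    (hle : ∀ a b : ℝ, a ^ 2 + b ^ 2 = 1 → m ≤ norm2 (Hᵀ *ᵥ (a • u₁ + b • u₂))) : m ≤ σ₂ := by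
  obtain ⟨a, b, hab, horth⟩ :=
    exists_sq_add_sq_eq_one_and_mul_add_mul_eq_zero (u₁ ⬝ᵥ v₁) (u₂ ⬝ᵥ v₁)
  have hx : (a • u₁ + b • u₂) ⬝ᵥ v₁ = 0 := by
    simpa only [add_dotProduct, smul_dotProduct, smul_eq_mul] using horth
  have hray := h.mul_transpose_mulVec_dotProduct_le hx
  rw [mul_transpose_mulVec_dotProduct, dotProduct_self_smul_add_smul h₁ h₂ h₁₂, hab,
    mul_one] at hray
  exact (pow_le_pow_iff_left₀ hm h.1 two_ne_zero).1
    ((pow_le_pow_left₀ hm (hle a b hab) 2).trans hray)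

end IsTopTwoSingular

section SkewPerturbation

variable {u₁ u₂ : Fin n → ℝ} {σ : ℝ} {Z : Matrix (Fin n) (Fin n) ℝ}

lemma sub_specNorm_le_of_isTopTwoSingular (h₁ : u₁ ⬝ᵥ u₁ = 1) (h₂ : u₂ ⬝ᵥ u₂ = 1)
    (h₁₂ : u₁ ⬝ᵥ u₂ = 0) (hσ : 0 ≤ σ) (hZ : specNorm Z ≤ σ) {σ₁ σ₂ : ℝ} {v₁ v₂ : Fin n → ℝ}
    (h : IsTopTwoSingular (σ • skewPair u₁ u₂ + Z) σ₁ σ₂ v₁ v₂) : σ - specNorm Z ≤ σ₂ := by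
  refine h.le_of_le_norm2_transpose_mulVec h₁ h₂ h₁₂ (sub_nonneg.2 hZ) fun a b hab => ?_
  set x := a • u₁ + b • u₂
  have hx : norm2 x = 1 := norm2_eq_one_iff.2 (by rw [dotProduct_self_smul_add_smul h₁ h₂ h₁₂, hab])
  have hKx : norm2 ((σ • skewPair u₁ u₂) *ᵥ x) = σ := by
    rw [smul_mulVec, norm2_smul, skewPair_mulVec_smul_add_smul h₁ h₂ h₁₂,
      norm2_eq_one_iff.2 (by rw [dotProduct_self_smul_add_smul h₁ h₂ h₁₂, neg_sq, add_comm, hab]),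
      abs_of_nonneg hσ, mul_one]
  have hsplit : (σ • skewPair u₁ u₂) *ᵥ x = Zᵀ *ᵥ x - (σ • skewPair u₁ u₂ + Z)ᵀ *ᵥ x := by
    rw [transpose_add, transpose_smul, transpose_skewPair, add_mulVec, smul_neg, neg_mulVec]
    abel
  have hZx : norm2 (Zᵀ *ᵥ x) ≤ specNorm Z := by
    simpa [hx, specNorm_transpose] using norm2_mulVec_le Zᵀ x
  have := norm2_sub_le (Zᵀ *ᵥ x) ((σ • skewPair u₁ u₂ + Z)ᵀ *ᵥ x)
  rw [← hsplit, hKx] at this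
  linarith

lemma norm2_perpProj_mulVec_le_of_eigenvector (h₁ : u₁ ⬝ᵥ u₁ = 1) (h₂ : u₂ ⬝ᵥ u₂ = 1)
    (h₁₂ : u₁ ⬝ᵥ u₂ = 0) {s : ℝ} {x : Fin n → ℝ} (hs : 0 < s) (hx : x ⬝ᵥ x = 1)
    (hev : ((σ • skewPair u₁ u₂ + Z) * (σ • skewPair u₁ u₂ + Z)ᵀ) *ᵥ x = s ^ 2 • x) :
    norm2 (perpProj u₁ u₂ *ᵥ x) ≤ specNorm Z / s := by
  set H := σ • skewPair u₁ u₂ + Z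
  set y := Hᵀ *ᵥ x
  have hy : norm2 y = s := by
    have := mul_transpose_mulVec_dotProduct H x
    rw [hev, smul_dotProduct, hx, smul_eq_mul, mul_one] at this
    exact (pow_left_inj₀ (norm2_nonneg y) hs.le two_ne_zero).1 this.symm
  -- `Hy = s² x`, and the projection kills the rank-two part of `H`
  have hproj : s ^ 2 • (perpProj u₁ u₂ *ᵥ x) = perpProj u₁ u₂ *ᵥ (Z *ᵥ y) := by
    rw [← mulVec_smul, ← hev, ← mulVec_mulVec, add_mulVec, mulVec_add, mulVec_mulVec,
      Matrix.mul_smul, perpProj_mul_skewPair h₁ h₂ h₁₂, smul_zero, zero_mulVec, zero_add]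
  have hle : s ^ 2 * norm2 (perpProj u₁ u₂ *ᵥ x) ≤ specNorm Z * s := by
    calc s ^ 2 * norm2 (perpProj u₁ u₂ *ᵥ x) = norm2 (perpProj u₁ u₂ *ᵥ (Z *ᵥ y)) := by
          rw [← hproj, norm2_smul, abs_of_nonneg (sq_nonneg s)]
      _ ≤ norm2 (Z *ᵥ y) := norm2_perpProj_mulVec_le h₁ h₂ h₁₂ _
      _ ≤ specNorm Z * s := hy ▸ norm2_mulVec_le Z y
  rw [le_div_iff₀ hs]
  nlinarith [norm2_nonneg (perpProj u₁ u₂ *ᵥ x)]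

end SkewPerturbation

lemma abs_mulVec_apply_le {m : ℕ} (u₁ u₂ : Fin n → ℝ) (B : Matrix (Fin m) (Fin n) ℝ)
    (x : Fin n → ℝ) (i : Fin m) :
    |(B *ᵥ x) i| ≤ |u₁ ⬝ᵥ x| * normInf (B *ᵥ u₁) + |u₂ ⬝ᵥ x| * normInf (B *ᵥ u₂) +
      norm2 (B *ᵥ (perpProj u₁ u₂ *ᵥ x)) := by
  conv_lhs => rw [eq_add_perpProj_mulVec (u₁ := u₁) (u₂ := u₂) x]
  simp only [mulVec_add, mulVec_smul, Pi.add_apply, Pi.smul_apply, smul_eq_mul]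
  refine (abs_add_three _ _ _).trans ?_
  rw [abs_mul, abs_mul]
  gcongr
  exacts [abs_apply_le_normInf _ i, abs_apply_le_normInf _ i, abs_apply_le_norm2 _ i]

lemma abs_sq_mulVec_apply_le_of_eigenvector {u₁ u₂ : Fin n → ℝ} (h₁ : u₁ ⬝ᵥ u₁ = 1)
    (h₂ : u₂ ⬝ᵥ u₂ = 1) (h₁₂ : u₁ ⬝ᵥ u₂ = 0) {σ Δ s : ℝ} {Z : Matrix (Fin n) (Fin n) ℝ}
    (hZ : specNorm Z ≤ Δ) {x : Fin n → ℝ} (hs : 0 < s) (hx : x ⬝ᵥ x = 1)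
    (hev : ((σ • skewPair u₁ u₂ + Z) * (σ • skewPair u₁ u₂ + Z)ᵀ) *ᵥ x = s ^ 2 • x) (i : Fin n) :
    |((Z * Z) *ᵥ x) i| ≤ normInf ((Z * Z) *ᵥ u₁) + normInf ((Z * Z) *ᵥ u₂) + Δ ^ 3 / s := by
  have hx₁ : norm2 x = 1 := norm2_eq_one_iff.2 hx
  have hcoef : ∀ u : Fin n → ℝ, u ⬝ᵥ u = 1 → |u ⬝ᵥ x| ≤ 1 := fun u hu => by
    simpa [norm2_eq_one_iff.2 hu, hx₁] using abs_dotProduct_le u x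
  have hΔ : 0 ≤ Δ := (specNorm_nonneg Z).trans hZ
  have hP : norm2 (perpProj u₁ u₂ *ᵥ x) ≤ Δ / s :=
    (norm2_perpProj_mulVec_le_of_eigenvector h₁ h₂ h₁₂ hs hx hev).trans (by gcongr)
  have hperp : norm2 ((Z * Z) *ᵥ (perpProj u₁ u₂ *ᵥ x)) ≤ Δ ^ 3 / s := by
    calc norm2 ((Z * Z) *ᵥ (perpProj u₁ u₂ *ᵥ x))
        ≤ specNorm Z * (specNorm Z * norm2 (perpProj u₁ u₂ *ᵥ x)) := by
          rw [← mulVec_mulVec]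
          exact (norm2_mulVec_le Z _).trans
            (mul_le_mul_of_nonneg_left (norm2_mulVec_le Z _) (specNorm_nonneg Z))
      _ ≤ Δ * (Δ * (Δ / s)) := by
          have := specNorm_nonneg Z
          have := norm2_nonneg (perpProj u₁ u₂ *ᵥ x)
          gcongr
      _ = Δ ^ 3 / s := by ring
  refine (abs_mulVec_apply_le u₁ u₂ (Z * Z) x i).trans ?_
  gcongr
  · exact mul_le_of_le_one_left (normInf_nonneg _) (hcoef u₁ h₁)
  · exact mul_le_of_le_one_left (normInf_nonneg _) (hcoef u₂ h₂)

lemma mul_inv_sq_le_of_le_add {σ s Δ N X : ℝ} (hσ : 0 < σ) (hs : 2 * σ / 3 ≤ s) (hΔ : 0 ≤ Δ)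
    (hN : 0 ≤ N) (hX : X ≤ N + Δ ^ 3 / s) :
    X * (s ^ 2)⁻¹ ≤ 27 * Δ ^ 3 / (4 * σ ^ 3) + 9 / (4 * σ ^ 2) * N := by
  have hs₀ : 0 < s := by linarith
  calc X * (s ^ 2)⁻¹ ≤ N / s ^ 2 + Δ ^ 3 / s ^ 3 := by
        rw [← div_eq_mul_inv]
        calc X / s ^ 2 ≤ (N + Δ ^ 3 / s) / s ^ 2 := by gcongr
          _ = N / s ^ 2 + Δ ^ 3 / s ^ 3 := by field_simp
    _ ≤ N / (2 * σ / 3) ^ 2 + Δ ^ 3 / (2 * σ / 3) ^ 3 := by gcongr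
    _ ≤ 27 * Δ ^ 3 / (4 * σ ^ 3) + 9 / (4 * σ ^ 2) * N := by
        have : Δ ^ 3 / (2 * σ / 3) ^ 3 ≤ 27 * Δ ^ 3 / (4 * σ ^ 3) := by
          rw [div_le_div_iff₀ (by positivity) (by positivity)]
          nlinarith [pow_pos hσ 3, pow_nonneg hΔ 3]
        have : N / (2 * σ / 3) ^ 2 = 9 / (4 * σ ^ 2) * N := by field_simp; ring
        linarith

lemma mul_twoCols {m k : ℕ} (B : Matrix (Fin m) (Fin k) ℝ) (u v : Fin k → ℝ) :
    B * twoCols u v = twoCols (B *ᵥ u) (B *ᵥ v) := by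
  ext i j
  fin_cases j <;> simp [twoCols, mul_apply, mulVec, dotProduct]

lemma twoCols_mul_diagonal {m : ℕ} (u v : Fin m → ℝ) (a b : ℝ) :
    twoCols u v * diagonal ![a, b] = twoCols (a • u) (b • v) := by
  ext i j
  fin_cases j <;> simp [twoCols, mul_comm]

lemma maxNorm_twoCols_le {m : ℕ} [NeZero m] {u v : Fin m → ℝ} {c : ℝ} (hu : ∀ i, |u i| ≤ c)
    (hv : ∀ i, |v i| ≤ c) : maxNorm (twoCols u v) ≤ c := by
  refine ciSup_le fun ⟨i, j⟩ => ?_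
  fin_cases j
  exacts [hu i, hv i]

lemma norm2_onesVec : norm2 (onesVec n) = √n := by
  simp [norm2, onesVec]

lemma dotProduct_self_inv_norm2_smul {x : Fin n → ℝ} (hx : x ≠ 0) :
    ((norm2 x)⁻¹ • x) ⬝ᵥ ((norm2 x)⁻¹ • x) = 1 := by
  rw [← norm2_sq, norm2_smul, abs_inv, abs_of_nonneg (norm2_nonneg x),
    inv_mul_cancel₀ (norm2_pos.2 hx).ne', one_pow]

lemma onesVec_dotProduct_sub_mean (hn : n ≠ 0) (r : Fin n → ℝ) :
    onesVec n ⬝ᵥ (r - (r ⬝ᵥ onesVec n / n) • onesVec n) = 0 := by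
  have : onesVec n ⬝ᵥ onesVec n = n := by simp [onesVec, dotProduct]
  rw [dotProduct_sub, dotProduct_smul, this, dotProduct_comm, smul_eq_mul,
    div_mul_cancel₀ _ (Nat.cast_ne_zero.2 hn), sub_self]

lemma vecMulVec_sub_vecMulVec_eq_smul_skewPair (r e : Fin n → ℝ) (α : ℝ) {t s : ℝ} (ht : t ≠ 0)
    (hs : s ≠ 0) :
    vecMulVec r e - vecMulVec e r = (t * s) • skewPair (t⁻¹ • e) (s⁻¹ • (r - α • e)) := by
  ext i j
  simp [skewPair, vecMulVec_apply]
  field_simp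
  ring

lemma abs_inv_sq_smul_sq_mulVec_apply_le {u₁ u₂ : Fin n → ℝ} (h₁ : u₁ ⬝ᵥ u₁ = 1)
    (h₂ : u₂ ⬝ᵥ u₂ = 1) (h₁₂ : u₁ ⬝ᵥ u₂ = 0) {σ Δ s : ℝ} {Z : Matrix (Fin n) (Fin n) ℝ}
    (hσ : 0 < σ) (hZ : specNorm Z ≤ Δ) (hs : 2 * σ / 3 ≤ s) {x : Fin n → ℝ} (hx : x ⬝ᵥ x = 1)
    (hev : ((σ • skewPair u₁ u₂ + Z) * (σ • skewPair u₁ u₂ + Z)ᵀ) *ᵥ x = s ^ 2 • x) (i : Fin n) :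
    |((s ^ 2)⁻¹ • ((Z * Z) *ᵥ x)) i| ≤ 27 * Δ ^ 3 / (4 * σ ^ 3) +
      9 / (4 * σ ^ 2) * (normInf ((Z * Z) *ᵥ u₁) + normInf ((Z * Z) *ᵥ u₂)) := by
  rw [Pi.smul_apply, smul_eq_mul, abs_mul, abs_of_nonneg (by positivity), mul_comm]
  exact mul_inv_sq_le_of_le_add hσ hs ((specNorm_nonneg Z).trans hZ)
    (add_nonneg (normInf_nonneg _) (normInf_nonneg _))
    (abs_sq_mulVec_apply_le_of_eigenvector h₁ h₂ h₁₂ hZ (by linarith) hx hev i)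

end RankTwo

theorem stmt_15_general {n : ℕ} (p η : ℝ)
    (hp : 0 < p) (hη : 0 < η)
    (r : Fin n → ℝ)
    (e : Fin n → ℝ) (he : e = onesVec n)
    (α : ℝ) (hα : α = inner2 r e / n) (hne : r ≠ α • e)
    (u₁ u₂ : Fin n → ℝ)
    (hu₁ : u₁ = (Real.sqrt n)⁻¹ • e)
    (hu₂ : u₂ = (norm2 (r - α • e))⁻¹ • (r - α • e))
    (C : Matrix (Fin n) (Fin n) ℝ) (hC : C = vecMulVec r e - vecMulVec e r)
    (Z : Matrix (Fin n) (Fin n) ℝ) (Δ : ℝ) (hZ : specNorm Z ≤ Δ)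
    (H : Matrix (Fin n) (Fin n) ℝ) (hH : H = (η * p) • C + Z)
    (σ : ℝ) (hσ : σ = η * p * Real.sqrt n * norm2 (r - α • e))
    (hΔ : Δ ≤ σ / 3)
    (σh₁ σh₂ : ℝ) (uh₁ uh₂ : Fin n → ℝ)
    (htop : IsTopTwoSingular H σh₁ σh₂ uh₁ uh₂)
    (E₅ : Matrix (Fin n) (Fin 2) ℝ)
    (hE₅ : E₅ = Z * Z * twoCols uh₁ uh₂ *
        Matrix.diagonal ![(σh₁ ^ 2)⁻¹, (σh₂ ^ 2)⁻¹]) :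
    maxNorm E₅ ≤ 27 * Δ ^ 3 / (4 * σ ^ 3) +
      9 / (4 * σ ^ 2) *
        (normInf ((Z * Z).mulVec u₁) + normInf ((Z * Z).mulVec u₂)) := by
  have hn₀ : n ≠ 0 := by rintro rfl; exact hne (Subsingleton.elim _ _)
  have hsqrt : 0 < √(n : ℝ) := Real.sqrt_pos.2 (by exact_mod_cast Nat.pos_of_ne_zero hn₀)
  have hd : r - α • e ≠ 0 := sub_ne_zero.2 hne
  have hσ₀ : 0 < σ := hσ ▸ by have := norm2_pos.2 hd; positivity
  have he₀ : e ≠ 0 := norm2_pos.1 (by rwa [he, norm2_onesVec])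
  have h₁ : u₁ ⬝ᵥ u₁ = 1 := by
    rw [hu₁, ← norm2_onesVec, ← he, dotProduct_self_inv_norm2_smul he₀]
  have h₂ : u₂ ⬝ᵥ u₂ = 1 := hu₂ ▸ dotProduct_self_inv_norm2_smul hd
  have h₁₂ : u₁ ⬝ᵥ u₂ = 0 := by
    rw [hu₁, hu₂, smul_dotProduct, dotProduct_smul, hα, he, inner2_eq_dotProduct,
      onesVec_dotProduct_sub_mean hn₀]
    simp
  have hHK : H = σ • skewPair u₁ u₂ + Z := by
    rw [hH, hC, vecMulVec_sub_vecMulVec_eq_smul_skewPair r e α hsqrt.ne' (norm2_pos.2 hd).ne',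
      smul_smul, ← mul_assoc, ← hσ, ← hu₁, ← hu₂]
  subst hHK
  have hσh₂ : 2 * σ / 3 ≤ σh₂ := by
    have := sub_specNorm_le_of_isTopTwoSingular h₁ h₂ h₁₂ hσ₀.le (by linarith) htop
    linarith
  obtain ⟨-, hσh₂₁, hv₁, hv₂, -, hev₁, hev₂, -⟩ := htop
  have : NeZero n := ⟨hn₀⟩
  rw [hE₅, mul_twoCols, twoCols_mul_diagonal]
  exact maxNorm_twoCols_le
    (abs_inv_sq_smul_sq_mulVec_apply_le h₁ h₂ h₁₂ hσ₀ hZ (hσh₂.trans hσh₂₁) hv₁ hev₁)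
    (abs_inv_sq_smul_sq_mulVec_apply_le h₁ h₂ h₁₂ hσ₀ hZ hσh₂ hv₂ hev₂)

/-- Lemma: max-norm bound on `E₅`. -/
theorem stmt_15 {n : ℕ} (hn : 2 ≤ n) (M p η : ℝ) (hM : 0 < M)
    (hp : 0 < p) (hp1 : p ≤ 1) (hη : 0 < η) (hη1 : η ≤ 1)
    (r : Fin n → ℝ) (hr : ∀ i, 0 ≤ r i ∧ r i ≤ M)
    (e : Fin n → ℝ) (he : e = onesVec n)
    (α : ℝ) (hα : α = inner2 r e / n) (hne : r ≠ α • e)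
    (u₁ u₂ : Fin n → ℝ)
    (hu₁ : u₁ = (Real.sqrt n)⁻¹ • e)
    (hu₂ : u₂ = (norm2 (r - α • e))⁻¹ • (r - α • e))
    (C : Matrix (Fin n) (Fin n) ℝ) (hC : C = vecMulVec r e - vecMulVec e r)
    (Z : Matrix (Fin n) (Fin n) ℝ) (Δ : ℝ) (hZ : specNorm Z ≤ Δ)
    (H : Matrix (Fin n) (Fin n) ℝ) (hH : H = (η * p) • C + Z)
    (σ : ℝ) (hσ : σ = η * p * Real.sqrt n * norm2 (r - α • e))
    (hΔ : Δ ≤ σ / 3)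
    (σh₁ σh₂ : ℝ) (uh₁ uh₂ : Fin n → ℝ)
    (htop : IsTopTwoSingular H σh₁ σh₂ uh₁ uh₂)
    (E₅ : Matrix (Fin n) (Fin 2) ℝ)
    (hE₅ : E₅ = Z * Z * twoCols uh₁ uh₂ *
        Matrix.diagonal ![(σh₁ ^ 2)⁻¹, (σh₂ ^ 2)⁻¹]) :
    maxNorm E₅ ≤ 27 * Δ ^ 3 / (4 * σ ^ 3) +
      9 / (4 * σ ^ 2) *
        (normInf ((Z * Z).mulVec u₁) + normInf ((Z * Z).mulVec u₂)) :=
  stmt_15_general p η hp hη r e he α hα hne u₁ u₂ hu₁ hu₂ C hC Z Δ hZ H hH σ hσ hΔ σh₁ σh₂ uh₁ uh₂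
    htop E₅ hE₅
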